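/- Let R be the root system of type A_n (n ≥ 1) and λ = -ω_n the negative of the last fundamental weight. Then Prim(σ_λ) = W_λ·(-ω_1), this set consists of the n vectors -ε_k + (1/(n+1))Σ_{i=1}^{n+1} ε_i for k = 1,...,n, and it is a basis of the weight lattice Λ_P. Moreover the affine span of Prim(σ_λ) equals -ω_1 + ℝ⟨α_1,...,α_{n-1}⟩. -/

import Mathlib

/-!
The stabilizer of `λ = -ω_n` in `W = S_{n+1}` consists of the permutations fixing the last
coordinate, so sorting coordinates identifies `σ_λ` with the cone `{v | Σ vᵢ = 0, vᵢ ≤ v_{n+1}}`.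
This is the simplicial cone on the vectors `u_k = -ε_k + (1/(n+1)) Σ εᵢ`, `k ≤ n`, whose dual
coordinates `v ↦ v_{n+1} - v_k` take integer values on `Λ_P`, the `ℤ`-span of the `u_k`
(`u_1 = -ω_1`, `u_{k+1} = ω_k - ω_{k+1}`). The rays of a simplicial cone are those of its
generators, and integrality of the dual coordinates makes each `u_k` primitive. The `u_k` form
the `W_λ`-orbit of `u_1`, and `u_{k+1} - u_k = α_k` gives the affine span.
-/

open scoped RealInnerProductSpace

namespace AnType

/-- The (orthogonal) reflection in the hyperplane orthogonal to `a`. -/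
noncomputable def reflAt {V : Type*} [NormedAddCommGroup V] [InnerProductSpace ℝ V]
    (a : V) : V → V :=
  fun v => v - (2 * ⟪v, a⟫ / ⟪a, a⟫) • a

/-- `F` is a face of the convex cone `σ`. -/
def IsFace {V : Type*} [NormedAddCommGroup V] [InnerProductSpace ℝ V]
    (σ F : Set V) : Prop :=
  F ⊆ σ ∧ Convex ℝ F ∧ ∀ x ∈ σ, ∀ y ∈ σ, x + y ∈ F → x ∈ F ∧ y ∈ F

/-- The ray generated by `v`. -/
def rayOf {V : Type*} [NormedAddCommGroup V] [InnerProductSpace ℝ V] (v : V) : Set V :=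
  {x | ∃ c : ℝ, 0 ≤ c ∧ x = c • v}

/-- The set of primitive lattice generators of the rays (one-dimensional faces) of the
cone `σ`, relative to the lattice `Λ`. -/
def Prim {V : Type*} [NormedAddCommGroup V] [InnerProductSpace ℝ V]
    (Λ : AddSubgroup V) (σ : Set V) : Set V :=
  {v | v ∈ Λ ∧ v ≠ 0 ∧ IsFace σ (rayOf v) ∧
    ∀ u ∈ Λ, u ∈ rayOf v → ∃ k : ℕ, u = k • v}

variable (n : ℕ)

/-- The standard basis vector `ε_i` of `ℝ^{n+1}`. -/
noncomputable def e (i : Fin (n + 1)) : EuclideanSpace ℝ (Fin (n + 1)) :=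
  EuclideanSpace.single i 1

/-- The simple roots `α_i = ε_i - ε_{i+1}` of `A_n` (Bourbaki conventions,
0-indexed). -/
noncomputable def simpleRoot (i : Fin n) : EuclideanSpace ℝ (Fin (n + 1)) :=
  e n i.castSucc - e n i.succ

/-- The vector `Σ_{i=1}^{n+1} ε_i`. -/
noncomputable def allOnes : EuclideanSpace ℝ (Fin (n + 1)) := ∑ i, e n i

/-- The fundamental weights `ω_i = ε_1 + ⋯ + ε_i - (i/(n+1)) Σ ε_j` of `A_n`
(Bourbaki conventions, 0-indexed: `fw i = ω_{i+1}`). -/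
noncomputable def fw (i : Fin n) : EuclideanSpace ℝ (Fin (n + 1)) :=
  (∑ k ∈ Finset.univ.filter fun k : Fin (n + 1) => (k : ℕ) ≤ (i : ℕ), e n k) -
    (((i : ℕ) + 1 : ℝ) / ((n : ℝ) + 1)) • allOnes n

/-- The anti-dominant Weyl chamber of `A_n`, inside the hyperplane orthogonal to
`Σ ε_i`. -/
noncomputable def antiDomChamber : Set (EuclideanSpace ℝ (Fin (n + 1))) :=
  {v | ⟪v, allOnes n⟫ = 0 ∧ ∀ j : Fin n, ⟪v, simpleRoot n j⟫ ≤ 0}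

/-- The Weyl group of `A_n` (the symmetric group `S_{n+1}`), generated by the simple
reflections. -/
noncomputable def Weyl :
    Subgroup ((EuclideanSpace ℝ (Fin (n + 1))) ≃ₗ[ℝ] (EuclideanSpace ℝ (Fin (n + 1)))) :=
  Subgroup.closure {g | ∃ i : Fin n, ∀ v, g v = reflAt (simpleRoot n i) v}

/-- `σ_λ = ⋃_{w ∈ W_λ} w·C`. -/
noncomputable def sigmaCone (l : EuclideanSpace ℝ (Fin (n + 1))) :
    Set (EuclideanSpace ℝ (Fin (n + 1))) :=
  ⋃ w ∈ {w | w ∈ Weyl n ∧ w l = l}, ⇑w '' antiDomChamber n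

/-- The weight lattice `Λ_P` of `A_n`: the `ℤ`-span of the fundamental weights. -/
noncomputable def weightLattice : AddSubgroup (EuclideanSpace ℝ (Fin (n + 1))) :=
  AddSubgroup.closure (Set.range (fw n))

end AnType

namespace AnType

section Ray

variable {V : Type*} [NormedAddCommGroup V] [InnerProductSpace ℝ V]

lemma self_mem_rayOf (v : V) : v ∈ rayOf v := ⟨1, zero_le_one, (one_smul ℝ v).symm⟩

lemma convex_rayOf (v : V) : Convex ℝ (rayOf v) := by
  rintro _ ⟨a, ha, rfl⟩ _ ⟨b, hb, rfl⟩ s t hs ht -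
  exact ⟨s * a + t * b, by positivity, by rw [smul_smul, smul_smul, ← add_smul]⟩

end Ray

section Biorthogonal

variable {V : Type*} [NormedAddCommGroup V] [InnerProductSpace ℝ V]

def simplicialCone {ι : Type*} [Fintype ι] (b : ι → V) : Set V :=
  {v | ∃ c : ι → ℝ, (∀ i, 0 ≤ c i) ∧ v = ∑ i, c i • b i}

variable {ι : Type*} [DecidableEq ι] {b : ι → V} {φ : ι → V →ₗ[ℝ] ℝ}

lemma ne_zero_of_biorthogonal (hbφ : ∀ i j, φ i (b j) = if i = j then 1 else 0) (i : ι) :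
    b i ≠ 0 :=
  fun h => by simpa [h] using hbφ i i

lemma exists_int_apply_of_mem_closure (hbφ : ∀ i j, φ i (b j) = if i = j then 1 else 0) {w : V}
    (hw : w ∈ AddSubgroup.closure (Set.range b)) (i : ι) : ∃ z : ℤ, φ i w = z := by
  induction hw using AddSubgroup.closure_induction with
  | mem x hx =>
    obtain ⟨j, rfl⟩ := hx
    exact ⟨if i = j then 1 else 0, by rw [hbφ]; split_ifs <;> simp⟩
  | zero => exact ⟨0, by simp⟩
  | add x y _ _ hx hy =>
    obtain ⟨zx, hzx⟩ := hx
    obtain ⟨zy, hzy⟩ := hy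
    exact ⟨zx + zy, by push_cast; rw [map_add, hzx, hzy]⟩
  | neg x _ hx =>
    obtain ⟨zx, hzx⟩ := hx
    exact ⟨-zx, by push_cast; rw [map_neg, hzx]⟩

variable [Fintype ι]

lemma sum_ite_smul_eq (b : ι → V) (k : ι) (c : ℝ) :
    ∑ j, (if j = k then c else 0) • b j = c • b k := by
  simp [ite_smul]

lemma smul_mem_simplicialCone (k : ι) {c : ℝ} (hc : 0 ≤ c) : c • b k ∈ simplicialCone b :=
  ⟨fun j => if j = k then c else 0, fun _ => ite_nonneg hc le_rfl, (sum_ite_smul_eq b k c).symm⟩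

lemma apply_sum_smul_of_biorthogonal (hbφ : ∀ i j, φ i (b j) = if i = j then 1 else 0)
    (c : ι → ℝ) (i : ι) : φ i (∑ j, c j • b j) = c i := by
  simp [hbφ]

lemma linearIndependent_of_biorthogonal (hbφ : ∀ i j, φ i (b j) = if i = j then 1 else 0) :
    LinearIndependent ℝ b :=
  Fintype.linearIndependent_iff.2 fun c hc i => by
    simpa [hc] using (apply_sum_smul_of_biorthogonal hbφ c i).symm

lemma isFace_simplicialCone_rayOf (hbφ : ∀ i j, φ i (b j) = if i = j then 1 else 0) (k : ι) :
    IsFace (simplicialCone b) (rayOf (b k)) := by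
  refine ⟨fun x ⟨c, hc, hx⟩ => hx ▸ smul_mem_simplicialCone k hc, convex_rayOf _, ?_⟩
  rintro _ ⟨cx, hcx, rfl⟩ _ ⟨cy, hcy, rfl⟩ ⟨t, -, hxy⟩
  have hvanish : ∀ j, j ≠ k → cx j = 0 ∧ cy j = 0 := fun j hj => by
    have := congrArg (φ j) hxy
    rw [map_add, apply_sum_smul_of_biorthogonal hbφ, apply_sum_smul_of_biorthogonal hbφ,
      map_smul, hbφ, if_neg hj, smul_zero] at this
    exact ⟨by linarith [hcx j, hcy j], by linarith [hcx j, hcy j]⟩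
  have hsingle : ∀ c : ι → ℝ, (∀ j, j ≠ k → c j = 0) → ∑ j, c j • b j = c k • b k :=
    fun c hc => Finset.sum_eq_single k (fun j _ hj => by rw [hc j hj, zero_smul]) (by simp)
  exact ⟨⟨cx k, hcx k, hsingle cx fun j hj => (hvanish j hj).1⟩,
    ⟨cy k, hcy k, hsingle cy fun j hj => (hvanish j hj).2⟩⟩

lemma exists_pos_smul_of_isFace_rayOf (hbφ : ∀ i j, φ i (b j) = if i = j then 1 else 0)
    {v : V} (hv : v ≠ 0) (hface : IsFace (simplicialCone b) (rayOf v)) :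
    ∃ k, ∃ t : ℝ, 0 < t ∧ v = t • b k := by
  obtain ⟨c, hc, rfl⟩ := hface.1 (self_mem_rayOf v)
  -- Split off a nonzero term `c k • b k`: the face property puts it on the ray of `v`.
  obtain ⟨k, hk⟩ : ∃ k, c k ≠ 0 := by
    by_contra! h
    exact hv (by simp [h])
  have hrest : ∑ j, Function.update c k 0 j • b j ∈ simplicialCone b :=
    ⟨_, fun j => by rcases eq_or_ne j k with rfl | hj <;> simp [*], rfl⟩
  have hsplit : c k • b k + ∑ j, Function.update c k 0 j • b j = ∑ j, c j • b j := by
    rw [← sum_ite_smul_eq b k, ← Finset.sum_add_distrib]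
    refine Finset.sum_congr rfl fun j _ => ?_
    rcases eq_or_ne j k with rfl | hj <;> simp [*]
  obtain ⟨s, hs, hks⟩ := (hface.2.2 _ (smul_mem_simplicialCone k (hc k)) _ hrest
    (hsplit ▸ self_mem_rayOf _)).1
  have hs0 : s ≠ 0 := by
    rintro rfl
    rw [zero_smul, smul_eq_zero] at hks
    exact hks.elim hk (ne_zero_of_biorthogonal hbφ k)
  refine ⟨k, c k / s, div_pos ((hc k).lt_of_ne' hk) (hs.lt_of_ne' hs0), ?_⟩
  rw [div_eq_inv_mul, mul_smul, hks, smul_smul, inv_mul_cancel₀ hs0, one_smul]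

theorem prim_simplicialCone (hbφ : ∀ i j, φ i (b j) = if i = j then 1 else 0) :
    Prim (AddSubgroup.closure (Set.range b)) (simplicialCone b) = Set.range b := by
  ext v
  constructor
  · rintro ⟨hvL, hv0, hface, hprim⟩
    obtain ⟨k, t, ht, rfl⟩ := exists_pos_smul_of_isFace_rayOf hbφ hv0 hface
    obtain ⟨z, hz⟩ := exists_int_apply_of_mem_closure hbφ hvL k
    rw [map_smul, hbφ, if_pos rfl, smul_eq_mul, mul_one] at hz
    obtain ⟨m, hm⟩ := hprim (b k) (AddSubgroup.subset_closure ⟨k, rfl⟩)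
      ⟨t⁻¹, inv_nonneg.2 ht.le, by rw [smul_smul, inv_mul_cancel₀ ht.ne', one_smul]⟩
    have hmt : (m : ℝ) * t = 1 := by
      simpa [hbφ, smul_smul] using (congrArg (φ k) hm).symm
    have hz1 : z = 1 := by
      rw [hz] at hmt ht
      exact Int.eq_one_of_mul_eq_one_left (by exact_mod_cast ht.le) (by exact_mod_cast hmt)
    exact ⟨k, by rw [hz, hz1, Int.cast_one, one_smul]⟩
  · rintro ⟨k, rfl⟩
    refine ⟨AddSubgroup.subset_closure ⟨k, rfl⟩, ne_zero_of_biorthogonal hbφ k,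
      isFace_simplicialCone_rayOf hbφ k, ?_⟩
    rintro _ hwL ⟨c, hc, rfl⟩
    obtain ⟨z, hz⟩ := exists_int_apply_of_mem_closure hbφ hwL k
    rw [map_smul, hbφ, if_pos rfl, smul_eq_mul, mul_one] at hz
    have hz0 : 0 ≤ z := by exact_mod_cast hz ▸ hc
    exact ⟨z.toNat, by
      rw [← Nat.cast_smul_eq_nsmul ℝ, hz, ← Int.cast_natCast, Int.toNat_of_nonneg hz0]⟩

end Biorthogonal

variable (n : ℕ)

lemma e_apply (i j : Fin (n + 1)) : e n i j = if j = i then 1 else 0 := by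
  simp [e]

lemma allOnes_apply (j : Fin (n + 1)) : allOnes n j = 1 := by
  simp [allOnes, e_apply]

lemma inner_allOnes (v : EuclideanSpace ℝ (Fin (n + 1))) : ⟪v, allOnes n⟫ = ∑ i, v i := by
  simp [PiLp.inner_apply, allOnes_apply]

lemma inner_simpleRoot (v : EuclideanSpace ℝ (Fin (n + 1))) (i : Fin n) :
    ⟪v, simpleRoot n i⟫ = v i.castSucc - v i.succ := by
  simp [simpleRoot, inner_sub_right, e, EuclideanSpace.inner_single_right]

lemma fw_apply (i : Fin n) (j : Fin (n + 1)) :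
    fw n i j = (if (j : ℕ) ≤ i then 1 else 0) - ((i : ℕ) + 1) / ((n : ℝ) + 1) := by
  simp [fw, allOnes_apply, e_apply, Finset.sum_apply]

/-- `-ε_k` projected onto the hyperplane `Σ xᵢ = 0`: the weights of the dual of the standard
representation. -/
noncomputable def dualStdWeight (k : Fin (n + 1)) : EuclideanSpace ℝ (Fin (n + 1)) :=
  -(e n k) + ((n : ℝ) + 1)⁻¹ • allOnes n

lemma dualStdWeight_apply (k j : Fin (n + 1)) :
    dualStdWeight n k j = ((n : ℝ) + 1)⁻¹ - if j = k then 1 else 0 := by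
  simp [dualStdWeight, e_apply, allOnes_apply]
  ring

lemma fw_zero (h : 0 < n) : fw n ⟨0, h⟩ = -dualStdWeight n 0 := by
  ext j
  simp only [PiLp.neg_apply, fw_apply, dualStdWeight_apply, Fin.ext_iff, Fin.val_zero,
    Nat.le_zero]
  split_ifs <;> field_simp <;> ring

lemma fw_succ {m : ℕ} (h : m + 1 < n) :
    fw n ⟨m + 1, h⟩ = fw n ⟨m, by omega⟩ - dualStdWeight n ⟨m + 1, by omega⟩ := by
  ext j
  simp only [PiLp.sub_apply, fw_apply, dualStdWeight_apply, Fin.ext_iff]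
  push_cast
  split_ifs <;> first | omega | (field_simp; ring)

lemma fw_last (h : n - 1 < n) : fw n ⟨n - 1, h⟩ = dualStdWeight n (Fin.last n) := by
  ext j
  have hj := j.isLt
  simp only [fw_apply, dualStdWeight_apply, Fin.ext_iff, Fin.val_last,
    Nat.cast_pred (show 0 < n by omega)]
  split_ifs <;> first | omega | (field_simp; ring)

noncomputable def coneGen (k : Fin n) : EuclideanSpace ℝ (Fin (n + 1)) :=
  dualStdWeight n k.castSucc

noncomputable def coneCoord (k : Fin n) : EuclideanSpace ℝ (Fin (n + 1)) →ₗ[ℝ] ℝ :=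
  (EuclideanSpace.proj (Fin.last n) - EuclideanSpace.proj k.castSucc :
    StrongDual ℝ (EuclideanSpace ℝ (Fin (n + 1))))

lemma coneCoord_apply (k : Fin n) (v : EuclideanSpace ℝ (Fin (n + 1))) :
    coneCoord n k v = v (Fin.last n) - v k.castSucc := rfl

lemma coneCoord_coneGen (i j : Fin n) : coneCoord n i (coneGen n j) = if i = j then 1 else 0 := by
  simp [coneCoord_apply, coneGen, dualStdWeight_apply, Fin.castSucc_ne_last, eq_comm]

lemma coneGen_zero (h : 0 < n) : coneGen n ⟨0, h⟩ = -fw n ⟨0, h⟩ := by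
  rw [fw_zero, neg_neg]
  rfl

lemma coneGen_succ {m : ℕ} (h : m + 1 < n) :
    coneGen n ⟨m + 1, h⟩ = fw n ⟨m, by omega⟩ - fw n ⟨m + 1, h⟩ := by
  rw [fw_succ, sub_sub_cancel]
  rfl

lemma fw_mem_closure_coneGen (m : ℕ) (hm : m < n) :
    fw n ⟨m, hm⟩ ∈ AddSubgroup.closure (Set.range (coneGen n)) := by
  have hgen : ∀ k, coneGen n k ∈ AddSubgroup.closure (Set.range (coneGen n)) :=
    fun k => AddSubgroup.subset_closure ⟨k, rfl⟩
  induction m with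
  | zero => simpa [coneGen_zero] using neg_mem (hgen ⟨0, hm⟩)
  | succ m ih =>
    rw [← sub_sub_cancel (fw n ⟨m, by omega⟩) (fw n ⟨m + 1, hm⟩), ← coneGen_succ]
    exact sub_mem (ih (by omega)) (hgen _)

lemma coneGen_mem_weightLattice (k : Fin n) : coneGen n k ∈ weightLattice n := by
  have hfw : ∀ i, fw n i ∈ weightLattice n := fun i => AddSubgroup.subset_closure ⟨i, rfl⟩
  obtain ⟨_ | m, hm⟩ := k
  · rw [coneGen_zero]
    exact neg_mem (hfw _)
  · rw [coneGen_succ]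
    exact sub_mem (hfw _) (hfw _)

lemma weightLattice_eq : weightLattice n = AddSubgroup.closure (Set.range (coneGen n)) :=
  le_antisymm ((AddSubgroup.closure_le _).2 fun _ ⟨⟨m, hm⟩, h⟩ => h ▸ fw_mem_closure_coneGen n m hm)
    ((AddSubgroup.closure_le _).2 fun _ ⟨k, h⟩ => h ▸ coneGen_mem_weightLattice n k)

noncomputable def permRep : Equiv.Perm (Fin (n + 1)) →*
    (EuclideanSpace ℝ (Fin (n + 1)) ≃ₗ[ℝ] EuclideanSpace ℝ (Fin (n + 1))) where
  toFun π := (LinearIsometryEquiv.piLpCongrLeft 2 ℝ ℝ π).toLinearEquiv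
  map_one' := rfl
  map_mul' _ _ := by ext; rfl

lemma permRep_apply (π : Equiv.Perm (Fin (n + 1))) (v : EuclideanSpace ℝ (Fin (n + 1)))
    (i : Fin (n + 1)) : permRep n π v i = v (π⁻¹ i) :=
  rfl

lemma reflAt_simpleRoot (i : Fin n) (v : EuclideanSpace ℝ (Fin (n + 1))) :
    reflAt (simpleRoot n i) v = permRep n (Equiv.swap i.castSucc i.succ) v := by
  have hne : i.castSucc ≠ i.succ := Fin.castSucc_lt_succ.ne
  have hnorm : ⟪simpleRoot n i, simpleRoot n i⟫ = 2 := by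
    rw [inner_simpleRoot]
    simp [simpleRoot, e_apply, hne, hne.symm]
    norm_num
  ext j
  simp only [reflAt]
  rw [hnorm, inner_simpleRoot]
  simp only [permRep_apply, Equiv.swap_inv, PiLp.sub_apply, PiLp.smul_apply, smul_eq_mul,
    simpleRoot, e_apply, Equiv.swap_apply_def]
  split_ifs <;> simp_all

lemma weyl_eq_range : Weyl n = (permRep n).range := by
  have hgen : {g | ∃ i : Fin n, ∀ v, g v = reflAt (simpleRoot n i) v} =
      permRep n '' Set.range fun i : Fin n => Equiv.swap i.castSucc i.succ := by
    ext g
    simp only [Set.mem_image, Set.exists_range_iff, reflAt_simpleRoot]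
    exact exists_congr fun i => ⟨fun h => (LinearEquiv.ext h).symm, fun h v => by rw [h]⟩
  have hswap : Subgroup.closure (Set.range fun i : Fin n => Equiv.swap i.castSucc i.succ) = ⊤ :=
    eq_top_iff.2 fun π _ => Submonoid.closure_le.2 Subgroup.subset_closure
      ((Equiv.Perm.mclosure_swap_castSucc_succ n).symm ▸ Submonoid.mem_top π)
  rw [Weyl, hgen, ← MonoidHom.map_closure, hswap, ← MonoidHom.range_eq_map]

lemma permRep_dualStdWeight (π : Equiv.Perm (Fin (n + 1))) (k : Fin (n + 1)) :
    permRep n π (dualStdWeight n k) = dualStdWeight n (π k) := by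
  ext j
  simp [permRep_apply, dualStdWeight_apply, Equiv.symm_apply_eq]

lemma dualStdWeight_injective : Function.Injective (dualStdWeight n) := by
  intro k l h
  simpa [dualStdWeight_apply] using congrArg (fun v => v k) h

lemma permRep_neg_dualStdWeight_last_eq_iff (π : Equiv.Perm (Fin (n + 1))) :
    permRep n π (-dualStdWeight n (Fin.last n)) = -dualStdWeight n (Fin.last n) ↔
      π (Fin.last n) = Fin.last n := by
  rw [map_neg, permRep_dualStdWeight, neg_inj, (dualStdWeight_injective n).eq_iff]

lemma exists_perm_fix_last_monotone_comp {α : Type*} [LinearOrder α] (f : Fin (n + 1) → α)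
    (hf : ∀ i, f i ≤ f (Fin.last n)) :
    ∃ π : Equiv.Perm (Fin (n + 1)), π (Fin.last n) = Fin.last n ∧ Monotone (f ∘ π) := by
  obtain ⟨σ, hσ⟩ : ∃ σ : Equiv.Perm (Fin (n + 1)), Monotone (f ∘ σ) := ⟨_, Tuple.monotone_sort f⟩
  have hmax : f (σ (Fin.last n)) = f (Fin.last n) :=
    le_antisymm (hf _) (by simpa using hσ (Fin.le_last (σ⁻¹ (Fin.last n))))
  have hswap : f ∘ Equiv.swap (σ (Fin.last n)) (Fin.last n) = f := by
    funext x
    simp only [Function.comp_apply, Equiv.swap_apply_def]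
    split_ifs <;> simp_all
  refine ⟨Equiv.swap (σ (Fin.last n)) (Fin.last n) * σ, by simp, ?_⟩
  rwa [Equiv.Perm.coe_mul, ← Function.comp_assoc, hswap]

def lastMaxCone : Set (EuclideanSpace ℝ (Fin (n + 1))) :=
  {v | ⟪v, allOnes n⟫ = 0 ∧ ∀ i, v i ≤ v (Fin.last n)}

lemma mem_antiDomChamber_iff (v : EuclideanSpace ℝ (Fin (n + 1))) :
    v ∈ antiDomChamber n ↔ ⟪v, allOnes n⟫ = 0 ∧ Monotone (fun i => v i) := by
  simp only [antiDomChamber, Set.mem_ofPred_eq, inner_simpleRoot, Fin.monotone_iff_le_succ,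
    sub_nonpos]

lemma sigmaCone_neg_dualStdWeight_last :
    sigmaCone n (-dualStdWeight n (Fin.last n)) = lastMaxCone n := by
  ext v
  simp only [sigmaCone, weyl_eq_range, Set.mem_iUnion, Set.mem_image, MonoidHom.mem_range]
  constructor
  · rintro ⟨_, ⟨⟨π, rfl⟩, hπ⟩, c, hc, rfl⟩
    rw [permRep_neg_dualStdWeight_last_eq_iff] at hπ
    rw [mem_antiDomChamber_iff, inner_allOnes] at hc
    refine ⟨?_, fun i => ?_⟩
    · rw [inner_allOnes, ← hc.1]
      exact Equiv.sum_comp π⁻¹ (fun i => c i)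
    · rw [permRep_apply, permRep_apply, Equiv.Perm.inv_eq_iff_eq.2 hπ.symm]
      exact hc.2 (Fin.le_last _)
  · rintro ⟨hsum, hmax⟩
    obtain ⟨π, hπ, hmono⟩ := exists_perm_fix_last_monotone_comp n (fun i => v i) hmax
    refine ⟨permRep n π, ⟨⟨π, rfl⟩, (permRep_neg_dualStdWeight_last_eq_iff n π).2 hπ⟩,
      WithLp.toLp 2 (fun i => v (π i)), (mem_antiDomChamber_iff n _).2 ⟨?_, hmono⟩, ?_⟩
    · rw [inner_allOnes, ← hsum, inner_allOnes]
      exact Equiv.sum_comp π (fun i => v i)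
    · ext i
      simp [permRep_apply]

lemma inner_dualStdWeight_allOnes (k : Fin (n + 1)) : ⟪dualStdWeight n k, allOnes n⟫ = 0 := by
  simp [inner_allOnes, dualStdWeight_apply, Finset.sum_sub_distrib, Nat.cast_add_one_ne_zero]

lemma eq_zero_of_coneCoord_eq_zero {w : EuclideanSpace ℝ (Fin (n + 1))}
    (hsum : ⟪w, allOnes n⟫ = 0) (hcoord : ∀ k, coneCoord n k w = 0) : w = 0 := by
  have hconst : ∀ i, w i = w (Fin.last n) := by
    intro i
    rcases Fin.eq_castSucc_or_eq_last i with ⟨k, rfl⟩ | rfl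
    · linarith [hcoord k, coneCoord_apply n k w]
    · rfl
  have hlast : w (Fin.last n) = 0 := by
    rw [inner_allOnes, Finset.sum_congr rfl fun i _ => hconst i] at hsum
    simpa [Nat.cast_add_one_ne_zero] using hsum
  ext i
  rw [hconst, hlast]
  rfl

lemma eq_sum_coneCoord_smul {v : EuclideanSpace ℝ (Fin (n + 1))} (hv : ⟪v, allOnes n⟫ = 0) :
    v = ∑ k, coneCoord n k v • coneGen n k := by
  rw [← sub_eq_zero]
  apply eq_zero_of_coneCoord_eq_zero
  · simp [inner_sub_left, sum_inner, inner_smul_left, hv, coneGen, inner_dualStdWeight_allOnes]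
  · intro k
    rw [map_sub, apply_sum_smul_of_biorthogonal (coneCoord_coneGen n), sub_self]

lemma simplicialCone_coneGen : simplicialCone (coneGen n) = lastMaxCone n := by
  ext v
  constructor
  · rintro ⟨c, hc, rfl⟩
    refine ⟨by simp [sum_inner, inner_smul_left, coneGen, inner_dualStdWeight_allOnes],
      fun i => ?_⟩
    rcases Fin.eq_castSucc_or_eq_last i with ⟨k, rfl⟩ | rfl
    · have := apply_sum_smul_of_biorthogonal (coneCoord_coneGen n) c k
      rw [coneCoord_apply] at this
      linarith [hc k]
    · exact le_rfl
  · rintro ⟨hsum, hmax⟩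
    refine ⟨fun k => coneCoord n k v, fun k => ?_, eq_sum_coneCoord_smul n hsum⟩
    simp only [coneCoord_apply]
    linarith [hmax k.castSucc]

lemma range_coneGen :
    Set.range (coneGen n) = {v | ∃ k : Fin (n + 1), (k : ℕ) < n ∧ v = dualStdWeight n k} := by
  ext v
  constructor
  · rintro ⟨k, rfl⟩
    exact ⟨k.castSucc, k.isLt, rfl⟩
  · rintro ⟨k, hk, rfl⟩
    exact ⟨⟨k, hk⟩, rfl⟩

lemma weyl_stabilizer_orbit_eq (hn : 1 ≤ n) :
    {v | ∃ w, (w ∈ Weyl n ∧ w (-dualStdWeight n (Fin.last n)) = -dualStdWeight n (Fin.last n)) ∧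
      v = w (dualStdWeight n 0)} = Set.range (coneGen n) := by
  have h0 : (0 : Fin (n + 1)) ≠ Fin.last n := by
    simp [Fin.ext_iff]
    omega
  ext v
  simp only [weyl_eq_range, Set.mem_ofPred_eq, MonoidHom.mem_range]
  constructor
  · rintro ⟨_, ⟨⟨π, rfl⟩, hπ⟩, rfl⟩
    rw [permRep_neg_dualStdWeight_last_eq_iff] at hπ
    rw [permRep_dualStdWeight]
    obtain ⟨k, hk⟩ | hlast := Fin.eq_castSucc_or_eq_last (π 0)
    · exact ⟨k, by rw [coneGen, ← hk]⟩
    · exact absurd (π.injective (hlast.trans hπ.symm)) h0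
  · rintro ⟨k, rfl⟩
    refine ⟨permRep n (Equiv.swap 0 k.castSucc), ⟨⟨_, rfl⟩, ?_⟩, ?_⟩
    · rw [permRep_neg_dualStdWeight_last_eq_iff]
      exact Equiv.swap_apply_of_ne_of_ne h0.symm (Fin.castSucc_lt_last k).ne'
    · rw [permRep_dualStdWeight, Equiv.swap_apply_left]
      rfl

lemma simpleRoot_eq_coneGen_sub (i : Fin n) (hi : (i : ℕ) + 1 < n) :
    simpleRoot n i = coneGen n ⟨i + 1, hi⟩ - coneGen n i := by
  simp only [simpleRoot, coneGen, dualStdWeight]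
  rw [show Fin.castSucc ⟨i + 1, hi⟩ = i.succ from rfl]
  abel

lemma affineSpan_range_coneGen (hn : 1 ≤ n) :
    affineSpan ℝ (Set.range (coneGen n)) = AffineSubspace.mk' (dualStdWeight n 0)
      (Submodule.span ℝ (simpleRoot n '' {i : Fin n | (i : ℕ) + 1 < n})) := by
  set D := Submodule.span ℝ (simpleRoot n '' {i : Fin n | (i : ℕ) + 1 < n})
  have hbase : coneGen n ⟨0, hn⟩ = dualStdWeight n 0 := congrArg _ (Fin.ext rfl)
  apply le_antisymm
  · rw [affineSpan_le]
    rintro _ ⟨⟨m, hm⟩, rfl⟩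
    rw [SetLike.mem_coe, AffineSubspace.mem_mk', vsub_eq_sub, ← hbase]
    induction m with
    | zero => simp
    | succ m ih =>
      rw [← sub_add_sub_cancel _ (coneGen n ⟨m, by omega⟩),
        ← simpleRoot_eq_coneGen_sub n ⟨m, by omega⟩ hm]
      exact add_mem (Submodule.subset_span ⟨_, hm, rfl⟩) (ih (by omega))
  · have hD : D ≤ (affineSpan ℝ (Set.range (coneGen n))).direction := by
      rw [direction_affineSpan, Submodule.span_le]
      rintro _ ⟨i, hi, rfl⟩
      rw [simpleRoot_eq_coneGen_sub n i hi]
      exact vsub_mem_vectorSpan ℝ ⟨_, rfl⟩ ⟨_, rfl⟩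
    intro x hx
    rw [AffineSubspace.mem_mk'] at hx
    have hbase_mem : dualStdWeight n 0 ∈ affineSpan ℝ (Set.range (coneGen n)) :=
      hbase ▸ subset_affineSpan ℝ _ ⟨_, rfl⟩
    simpa using AffineSubspace.vadd_mem_of_mem_direction (hD hx) hbase_mem

lemma prim_sigmaCone_neg_fw_last (h : n - 1 < n) :
    Prim (weightLattice n) (sigmaCone n (-fw n ⟨n - 1, h⟩)) = Set.range (coneGen n) := by
  rw [fw_last, sigmaCone_neg_dualStdWeight_last, ← simplicialCone_coneGen, weightLattice_eq,
    prim_simplicialCone (coneCoord_coneGen n)]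

end AnType

/-- for `A_n` (`n ≥ 1`) and `λ = -ω_n`, the set `Prim(σ_λ)` equals
`W_λ·(-ω_1)`, consists of the `n` vectors `-ε_k + (1/(n+1)) Σ ε_i`, `k = 1,…,n`, is a
basis of the weight lattice `Λ_P`, and its affine span is `-ω_1 + ℝ⟨α_1,…,α_{n-1}⟩`. -/
theorem statement18 (n : ℕ) (hn : 1 ≤ n) :
    AnType.Prim (AnType.weightLattice n)
        (AnType.sigmaCone n (-(AnType.fw n ⟨n - 1, by omega⟩))) =
      {v | ∃ k : Fin (n + 1), (k : ℕ) < n ∧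
        v = -(AnType.e n k) + (((n : ℝ) + 1)⁻¹) • AnType.allOnes n} ∧
    AnType.Prim (AnType.weightLattice n)
        (AnType.sigmaCone n (-(AnType.fw n ⟨n - 1, by omega⟩))) =
      {v | ∃ w, (w ∈ AnType.Weyl n ∧
          w (-(AnType.fw n ⟨n - 1, by omega⟩)) = -(AnType.fw n ⟨n - 1, by omega⟩)) ∧
        v = w (-(AnType.fw n ⟨0, by omega⟩))} ∧
    LinearIndependent ℝ (fun k : Fin n =>
      -(AnType.e n k.castSucc) + (((n : ℝ) + 1)⁻¹) • AnType.allOnes n) ∧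
    AddSubgroup.closure (Set.range fun k : Fin n =>
        -(AnType.e n k.castSucc) + (((n : ℝ) + 1)⁻¹) • AnType.allOnes n) =
      AnType.weightLattice n ∧
    (affineSpan ℝ (AnType.Prim (AnType.weightLattice n)
        (AnType.sigmaCone n (-(AnType.fw n ⟨n - 1, by omega⟩)))) :
          Set (EuclideanSpace ℝ (Fin (n + 1)))) =
      {x | ∃ y ∈ Submodule.span ℝ (AnType.simpleRoot n '' {i : Fin n | (i : ℕ) + 1 < n}),
        x = -(AnType.fw n ⟨0, by omega⟩) + y} := by
  rw [AnType.prim_sigmaCone_neg_fw_last, AnType.fw_last, AnType.fw_zero n hn, neg_neg]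
  refine ⟨AnType.range_coneGen n, (AnType.weyl_stabilizer_orbit_eq n hn).symm,
    AnType.linearIndependent_of_biorthogonal (AnType.coneCoord_coneGen n),
    (AnType.weightLattice_eq n).symm, ?_⟩
  ext x
  rw [AnType.affineSpan_range_coneGen n hn, SetLike.mem_coe, AffineSubspace.mem_mk', vsub_eq_sub]
  exact ⟨fun h => ⟨_, h, (add_sub_cancel _ _).symm⟩,
    fun ⟨y, hy, hx⟩ => by rwa [hx, add_sub_cancel_left]⟩
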